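/- arXiv:1901.07224 — 2 statements merged into one kernel-verified Lean document; each statement's English description precedes it below -/
import Mathlib

section
/- For every a ∈ ℝ and every −π/2 < s < r < π/2 there exists b > a such that (e^b + e^a)(tan r − tan s) = (e^b − e^a)(sec r + sec s). In particular there exist a < b and −π/2 < s < r < π/2 for which the total weighted length of the two grim-reaper arcs equals that of the two vertical sides, realizing the structural condition α_f(Ω) = β_f(Ω) of case (b) of the Jenkins-Serrin existence theorem on the grim-reaper quadrilateral. -/
/-!
With `T = tan r - tan s` and `S = sec r + sec s`, the equation is linear in `exp b` and is solved by
`exp b = exp a * (S + T) / (S - T)`; this exceeds `exp a` because `0 < T < S`, where `T < S`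
amounts to `sin r < 1` and `-sin s < 1`.
-/

open Real

theorem exists_gt_exp_add_mul_eq_exp_sub_mul (a : ℝ) {T S : ℝ} (hT : 0 < T) (hTS : T < S) :
    ∃ b, a < b ∧ (exp b + exp a) * T = (exp b - exp a) * S := by
  have hST : 0 < S - T := sub_pos.mpr hTS
  have hratio : 1 < (S + T) / (S - T) := by
    rw [one_lt_div hST]
    linarith
  refine ⟨a + log ((S + T) / (S - T)), by linarith [log_pos hratio], ?_⟩
  rw [exp_add, exp_log (by linarith)]
  field_simp
  ring

theorem tan_lt_one_div_cos {x : ℝ} (hx : 0 < cos x) : tan x < 1 / cos x := by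
  have hsin : sin x < 1 := by nlinarith [sin_sq_add_cos_sq x, sin_le_one x]
  rw [tan_eq_sin_div_cos]
  exact div_lt_div_of_pos_right hsin hx

theorem tan_sub_tan_lt_one_div_cos_add_one_div_cos {s r : ℝ} (hs : 0 < cos s) (hr : 0 < cos r) :
    tan r - tan s < 1 / cos r + 1 / cos s := by
  have hneg : tan (-s) < 1 / cos (-s) := tan_lt_one_div_cos (by rwa [cos_neg])
  rw [tan_neg, cos_neg] at hneg
  linarith [tan_lt_one_div_cos hr]

/-- For every `a` and every `-π/2 < s < r < π/2` there exists `b > a` realizing the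
equality of weighted lengths of the grim-reaper arcs and the vertical sides; in
particular there exist parameters realizing the structural condition
`α_f(Ω) = β_f(Ω)` of case (b) of the Jenkins-Serrin existence theorem. -/
theorem exists_length_balance :
    (∀ a s r : ℝ, -(π/2) < s → s < r → r < π/2 →
      ∃ b, a < b ∧
        (Real.exp b + Real.exp a) * (Real.tan r - Real.tan s)
          = (Real.exp b - Real.exp a) * (1 / Real.cos r + 1 / Real.cos s)) ∧
    (∃ a b s r : ℝ, a < b ∧ -(π/2) < s ∧ s < r ∧ r < π/2 ∧
      (Real.exp b + Real.exp a) * (Real.tan r - Real.tan s)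
        = (Real.exp b - Real.exp a) * (1 / Real.cos r + 1 / Real.cos s)) := by
  have balance : ∀ a s r : ℝ, -(π/2) < s → s < r → r < π/2 → ∃ b, a < b ∧
      (exp b + exp a) * (tan r - tan s) = (exp b - exp a) * (1 / cos r + 1 / cos s) := by
    intro a s r hs hsr hr
    have hcs : 0 < cos s := cos_pos_of_mem_Ioo ⟨hs, hsr.trans hr⟩
    have hcr : 0 < cos r := cos_pos_of_mem_Ioo ⟨hs.trans hsr, hr⟩
    exact exists_gt_exp_add_mul_eq_exp_sub_mul a
      (sub_pos.mpr (tan_lt_tan_of_lt_of_lt_pi_div_two hs hr hsr))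
      (tan_sub_tan_lt_one_div_cos_add_one_div_cos hcs hcr)
  refine ⟨balance, ?_⟩
  have h0 : -(π/2) < 0 := by linarith [pi_pos]
  have h1 : (0:ℝ) < π/4 := by linarith [pi_pos]
  have h2 : π/4 < π/2 := by linarith [pi_pos]
  obtain ⟨b, hab, heq⟩ := balance 0 0 (π/4) h0 h1 h2
  exact ⟨0, b, 0, π/4, hab, h0, h1, h2, heq⟩
end

section
/- Let n ≥ 1 and v₁, v₂ ∈ ℝⁿ. Set Wᵢ = √(1 + |vᵢ|²) and Nᵢ = (1/Wᵢ, −vᵢ/Wᵢ) ∈ ℝ × ℝⁿ (so |Nᵢ| = 1). Then ⟨v₁ − v₂, v₁/W₁ − v₂/W₂⟩ = ½ (W₁ + W₂) |N₁ − N₂|². In particular ⟨v₁ − v₂, v₁/W₁ − v₂/W₂⟩ ≥ 0, with equality if and only if v₁ = v₂. -/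
open Real RealInnerProductSpace

/-! Writing `Wᵢ = areaFactor vᵢ` and `Nᵢ = graphNormal vᵢ`, the normals satisfy
`⟪N₁, N₂⟫ = (1 + ⟪v₁, v₂⟫) / (W₁ W₂)`, and expanding `‖vᵢ‖² = Wᵢ² - 1` turns
the left hand side into `W₁ + W₂ - (W₁ + W₂) ⟪N₁, N₂⟫`. Since the `Nᵢ` are unit vectors,
`2 - 2 ⟪N₁, N₂⟫ = ‖N₁ - N₂‖²`. Positivity of `W₁ + W₂` and injectivity of `v ↦ N`
give the equality case. -/

section AreaFactor

variable {E : Type*} [Norm E]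

noncomputable def areaFactor (v : E) : ℝ := √(1 + ‖v‖ ^ 2)

lemma areaFactor_pos (v : E) : 0 < areaFactor v := Real.sqrt_pos.mpr (by positivity)

lemma sq_areaFactor (v : E) : areaFactor v ^ 2 = 1 + ‖v‖ ^ 2 :=
  Real.sq_sqrt (by positivity)

end AreaFactor

section GraphNormal

variable {E : Type*} [NormedAddCommGroup E] [InnerProductSpace ℝ E]

noncomputable def graphNormal (v : E) : WithLp 2 (ℝ × E) :=
  WithLp.toLp 2 ((areaFactor v)⁻¹, -((areaFactor v)⁻¹ • v))

lemma inner_graphNormal (v₁ v₂ : E) :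
    ⟪graphNormal v₁, graphNormal v₂⟫ = (1 + ⟪v₁, v₂⟫) / (areaFactor v₁ * areaFactor v₂) := by
  have h₁ := (areaFactor_pos v₁).ne'
  have h₂ := (areaFactor_pos v₂).ne'
  simp only [graphNormal, WithLp.prod_inner_apply, inner_neg_neg, real_inner_smul_left,
    real_inner_smul_right, RCLike.inner_apply, conj_trivial]
  field_simp

lemma norm_graphNormal (v : E) : ‖graphNormal v‖ = 1 := by
  have hsq : ‖graphNormal v‖ ^ 2 = 1 := by
    rw [← real_inner_self_eq_norm_sq, inner_graphNormal, real_inner_self_eq_norm_sq,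
      ← sq_areaFactor, ← sq, div_self (pow_ne_zero 2 (areaFactor_pos v).ne')]
  exact (pow_eq_one_iff_of_nonneg (norm_nonneg _) two_ne_zero).mp hsq

lemma graphNormal_injective : Function.Injective (graphNormal : E → WithLp 2 (ℝ × E)) := by
  intro v₁ v₂ h
  obtain ⟨hW, hv⟩ := Prod.ext_iff.mp (WithLp.toLp_injective 2 h)
  dsimp only at hW hv
  rw [hW, neg_inj] at hv
  exact smul_right_injective E (inv_ne_zero (areaFactor_pos v₂).ne') hv

lemma norm_sub_graphNormal_sq (v₁ v₂ : E) :
    ‖graphNormal v₁ - graphNormal v₂‖ ^ 2 = 2 - 2 * ⟪graphNormal v₁, graphNormal v₂⟫ := by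
  rw [norm_sub_sq_real, norm_graphNormal, norm_graphNormal]
  ring

lemma inner_sub_smul_sub_smul_eq (v₁ v₂ : E) :
    ⟪v₁ - v₂, (areaFactor v₁)⁻¹ • v₁ - (areaFactor v₂)⁻¹ • v₂⟫
      = areaFactor v₁ + areaFactor v₂
        - (areaFactor v₁ + areaFactor v₂) * ⟪graphNormal v₁, graphNormal v₂⟫ := by
  have h₁ := (areaFactor_pos v₁).ne'
  have h₂ := (areaFactor_pos v₂).ne'
  have hv₁ : ‖v₁‖ ^ 2 = areaFactor v₁ ^ 2 - 1 := by rw [sq_areaFactor]; ring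
  have hv₂ : ‖v₂‖ ^ 2 = areaFactor v₂ ^ 2 - 1 := by rw [sq_areaFactor]; ring
  rw [inner_graphNormal, inner_sub_left, inner_sub_right, inner_sub_right,
    real_inner_smul_right, real_inner_smul_right, real_inner_smul_right, real_inner_smul_right,
    real_inner_self_eq_norm_sq, real_inner_self_eq_norm_sq, real_inner_comm v₁ v₂, hv₁, hv₂]
  field_simp
  ring

theorem inner_sub_smul_sub_smul_eq_half_mul_norm_sq (v₁ v₂ : E) :
    ⟪v₁ - v₂, (areaFactor v₁)⁻¹ • v₁ - (areaFactor v₂)⁻¹ • v₂⟫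
      = 1 / 2 * (areaFactor v₁ + areaFactor v₂) * ‖graphNormal v₁ - graphNormal v₂‖ ^ 2 := by
  rw [inner_sub_smul_sub_smul_eq, norm_sub_graphNormal_sq]
  ring

theorem inner_sub_smul_sub_smul_eq_zero_iff (v₁ v₂ : E) :
    ⟪v₁ - v₂, (areaFactor v₁)⁻¹ • v₁ - (areaFactor v₂)⁻¹ • v₂⟫ = 0 ↔ v₁ = v₂ := by
  have hW : 1 / 2 * (areaFactor v₁ + areaFactor v₂) ≠ 0 := by
    have := areaFactor_pos v₁
    have := areaFactor_pos v₂
    positivity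
  rw [inner_sub_smul_sub_smul_eq_half_mul_norm_sq, mul_eq_zero, or_iff_right hW,
    pow_eq_zero_iff two_ne_zero, norm_eq_zero, sub_eq_zero, graphNormal_injective.eq_iff]

end GraphNormal

theorem translator_monotonicity_identity_general (n : ℕ)
    (v₁ v₂ : EuclideanSpace ℝ (Fin n)) :
    let W₁ : ℝ := Real.sqrt (1 + ‖v₁‖ ^ 2)
    let W₂ : ℝ := Real.sqrt (1 + ‖v₂‖ ^ 2)
    let N₁ : WithLp 2 (ℝ × EuclideanSpace ℝ (Fin n)) :=
      (WithLp.equiv 2 (ℝ × EuclideanSpace ℝ (Fin n))).symm (1 / W₁, -(W₁⁻¹ • v₁))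
    let N₂ : WithLp 2 (ℝ × EuclideanSpace ℝ (Fin n)) :=
      (WithLp.equiv 2 (ℝ × EuclideanSpace ℝ (Fin n))).symm (1 / W₂, -(W₂⁻¹ • v₂))
    ‖N₁‖ = 1 ∧ ‖N₂‖ = 1 ∧
    (inner ℝ (v₁ - v₂) (W₁⁻¹ • v₁ - W₂⁻¹ • v₂) : ℝ)
      = (1/2) * (W₁ + W₂) * ‖N₁ - N₂‖ ^ 2 ∧
    (0 : ℝ) ≤ (inner ℝ (v₁ - v₂) (W₁⁻¹ • v₁ - W₂⁻¹ • v₂) : ℝ) ∧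
    ((inner ℝ (v₁ - v₂) (W₁⁻¹ • v₁ - W₂⁻¹ • v₂) : ℝ) = 0 ↔ v₁ = v₂) := by
  intro W₁ W₂ N₁ N₂
  have hN₁ : N₁ = graphNormal v₁ := by simp [N₁, W₁, graphNormal, areaFactor]
  have hN₂ : N₂ = graphNormal v₂ := by simp [N₂, W₂, graphNormal, areaFactor]
  have key := inner_sub_smul_sub_smul_eq_half_mul_norm_sq v₁ v₂
  have hW₁ := areaFactor_pos v₁
  have hW₂ := areaFactor_pos v₂
  rw [hN₁, hN₂]
  exact ⟨norm_graphNormal v₁, norm_graphNormal v₂, key, key ▸ by positivity,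
    inner_sub_smul_sub_smul_eq_zero_iff v₁ v₂⟩

/-- The algebraic identity behind the maximum principle for the graphical translator
equation: with `Wᵢ = √(1 + |vᵢ|²)` and `Nᵢ = (1/Wᵢ, -vᵢ/Wᵢ)` the downward unit normals,
`⟨v₁ - v₂, v₁/W₁ - v₂/W₂⟩ = ½ (W₁ + W₂) |N₁ - N₂|²`; in particular the left hand side is
nonnegative and vanishes iff `v₁ = v₂`. -/
theorem translator_monotonicity_identity (n : ℕ) (hn : 1 ≤ n)
    (v₁ v₂ : EuclideanSpace ℝ (Fin n)) :
    let W₁ : ℝ := Real.sqrt (1 + ‖v₁‖ ^ 2)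
    let W₂ : ℝ := Real.sqrt (1 + ‖v₂‖ ^ 2)
    let N₁ : WithLp 2 (ℝ × EuclideanSpace ℝ (Fin n)) :=
      (WithLp.equiv 2 (ℝ × EuclideanSpace ℝ (Fin n))).symm (1 / W₁, -(W₁⁻¹ • v₁))
    let N₂ : WithLp 2 (ℝ × EuclideanSpace ℝ (Fin n)) :=
      (WithLp.equiv 2 (ℝ × EuclideanSpace ℝ (Fin n))).symm (1 / W₂, -(W₂⁻¹ • v₂))
    ‖N₁‖ = 1 ∧ ‖N₂‖ = 1 ∧
    (inner ℝ (v₁ - v₂) (W₁⁻¹ • v₁ - W₂⁻¹ • v₂) : ℝ)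
      = (1/2) * (W₁ + W₂) * ‖N₁ - N₂‖ ^ 2 ∧
    (0 : ℝ) ≤ (inner ℝ (v₁ - v₂) (W₁⁻¹ • v₁ - W₂⁻¹ • v₂) : ℝ) ∧
    ((inner ℝ (v₁ - v₂) (W₁⁻¹ • v₁ - W₂⁻¹ • v₂) : ℝ) = 0 ↔ v₁ = v₂) :=
  translator_monotonicity_identity_general n v₁ v₂
end
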